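/- Let S be a Λ-Carleson collection of dyadic cubes with no infinitely increasing chains, and let w ∈ A_p^D with 1/Λ-sparse major sets. Then b_S^w := Σ_{Q∈S} ⟨w⟩_Q 1_Q satisfies ‖b_S^w‖_{BMO^D(w)} ≤ 2[w]_{A_p} Λ^p. -/

import Mathlib

open MeasureTheory

/-- A dyadic cube in `ℝⁿ` (standard dyadic grid). -/
structure DyadicCube (n : ℕ) where
  k : ℤ
  m : Fin n → ℤ

/-- The set of points of a dyadic cube. -/
def DyadicCube.toSet {n : ℕ} (Q : DyadicCube n) : Set (Fin n → ℝ) :=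
  {x | ∀ i, (Q.m i : ℝ) * 2 ^ Q.k ≤ x i ∧ x i < ((Q.m i : ℝ) + 1) * 2 ^ Q.k}

/-- Lebesgue measure of a dyadic cube, as a real number. -/
noncomputable def DyadicCube.vol {n : ℕ} (Q : DyadicCube n) : ℝ :=
  (volume Q.toSet).toReal

/-- Lebesgue average of `w` over a dyadic cube `Q`. -/
noncomputable def davg {n : ℕ} (w : (Fin n → ℝ) → ℝ) (Q : DyadicCube n) : ℝ :=
  (∫ x in Q.toSet, w x) / Q.vol

/-- `S` is `Λ`-Carleson (phrased via finite subfamilies). -/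
def IsCarleson {n : ℕ} (Λ : ℝ) (S : Set (DyadicCube n)) : Prop :=
  ∀ Q : DyadicCube n, ∀ F : Finset (DyadicCube n),
    (∀ P ∈ F, P ∈ S ∧ P.toSet ⊆ Q.toSet) → ∑ P ∈ F, P.vol ≤ Λ * Q.vol

/-- The weighted sparse BMO function `b_S^w = Σ_{Q∈S} ⟨w⟩_Q 1_Q`. -/
noncomputable def bSw {n : ℕ} (S : Set (DyadicCube n)) (w : (Fin n → ℝ) → ℝ) :
    (Fin n → ℝ) → ℝ :=
  fun x => ∑' Q : S,
    Set.indicator (Q : DyadicCube n).toSet (fun _ => davg w (Q : DyadicCube n)) x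

open scoped ENNReal NNReal

namespace DyadicCube

instance {n : ℕ} : Countable (DyadicCube n) :=
  Function.Injective.countable (f := fun Q : DyadicCube n => (Q.k, Q.m))
    (fun Q R h => by cases Q; cases R; simpa using h)

lemma toSet_eq_pi {n : ℕ} (Q : DyadicCube n) :
    Q.toSet = Set.pi Set.univ
      (fun i => Set.Ico ((Q.m i : ℝ) * 2 ^ Q.k) (((Q.m i : ℝ) + 1) * 2 ^ Q.k)) := by
  ext x; simp [toSet, Set.mem_pi]

lemma measurableSet_toSet {n : ℕ} (Q : DyadicCube n) : MeasurableSet Q.toSet := by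
  rw [toSet_eq_pi]
  exact MeasurableSet.univ_pi fun i => measurableSet_Ico

lemma volume_toSet {n : ℕ} (Q : DyadicCube n) :
    volume Q.toSet = ENNReal.ofReal ((2:ℝ) ^ Q.k) ^ n := by
  rw [toSet_eq_pi, volume_pi_pi]
  have : ∀ i : Fin n, volume (Set.Ico ((Q.m i : ℝ) * 2 ^ Q.k) (((Q.m i : ℝ) + 1) * 2 ^ Q.k))
      = ENNReal.ofReal ((2:ℝ) ^ Q.k) := by
    intro i; rw [Real.volume_Ico]; congr 1; ring
  simp [this]

lemma volume_toSet_lt_top {n : ℕ} (Q : DyadicCube n) : volume Q.toSet < ⊤ := by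
  rw [volume_toSet]; exact ENNReal.pow_lt_top ENNReal.ofReal_lt_top

lemma volume_toSet_pos {n : ℕ} (Q : DyadicCube n) : 0 < volume Q.toSet := by
  rw [volume_toSet]
  have : (0:ℝ) < (2:ℝ) ^ Q.k := zpow_pos (by norm_num) _
  positivity

lemma vol_eq {n : ℕ} (Q : DyadicCube n) : Q.vol = ((2:ℝ) ^ Q.k) ^ n := by
  have h2 : (0:ℝ) ≤ (2:ℝ) ^ Q.k := le_of_lt (zpow_pos (by norm_num) _)
  rw [vol, volume_toSet, ← ENNReal.ofReal_pow h2, ENNReal.toReal_ofReal (by positivity)]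

lemma vol_pos {n : ℕ} (Q : DyadicCube n) : 0 < Q.vol := by
  rw [vol_eq]
  have : (0:ℝ) < (2:ℝ) ^ Q.k := zpow_pos (by norm_num) _
  positivity

lemma nonempty_toSet {n : ℕ} (Q : DyadicCube n) : Q.toSet.Nonempty := by
  refine ⟨fun i => (Q.m i : ℝ) * 2 ^ Q.k, fun i => ⟨le_refl _, ?_⟩⟩
  have : (0:ℝ) < (2:ℝ) ^ Q.k := zpow_pos (by norm_num) _
  show (Q.m i : ℝ) * 2 ^ Q.k < ((Q.m i : ℝ) + 1) * 2 ^ Q.k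
  nlinarith

/-- dyadic interval inclusion -/
lemma interval_subset {k k' : ℤ} {m m' : ℤ} (hk : k ≤ k') {x : ℝ}
    (h1 : (m : ℝ) * 2 ^ k ≤ x ∧ x < ((m : ℝ) + 1) * 2 ^ k)
    (h2 : (m' : ℝ) * 2 ^ k' ≤ x ∧ x < ((m' : ℝ) + 1) * 2 ^ k') :
    ∀ y : ℝ, (m : ℝ) * 2 ^ k ≤ y ∧ y < ((m : ℝ) + 1) * 2 ^ k →
      (m' : ℝ) * 2 ^ k' ≤ y ∧ y < ((m' : ℝ) + 1) * 2 ^ k' := by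
  set e : ℕ := (k' - k).toNat with he
  have hke : (2:ℝ) ^ k' = 2 ^ k * (2 ^ e : ℤ) := by
    push_cast
    rw [← zpow_natCast (2:ℝ) e, ← zpow_add₀ (by norm_num : (2:ℝ) ≠ 0)]
    congr 1
    omega
  have h2k : (0:ℝ) < (2:ℝ) ^ k := zpow_pos (by norm_num) _
  have c1 : (m' * 2 ^ e : ℤ) ≤ m := by
    have h0 : (m' : ℝ) * 2 ^ k' < ((m:ℝ) + 1) * 2 ^ k := lt_of_le_of_lt h2.1 h1.2
    rw [hke, show (m' : ℝ) * (2 ^ k * ((2 ^ e : ℤ) : ℝ)) = ((m' : ℝ) * ((2 ^ e : ℤ) : ℝ)) * 2 ^ k from by ring] at h0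
    have h1' : (m' : ℝ) * ((2 ^ e : ℤ) : ℝ) < (m:ℝ) + 1 := lt_of_mul_lt_mul_right h0 h2k.le
    have : ((m' * 2 ^ e : ℤ) : ℝ) < ((m + 1 : ℤ) : ℝ) := by push_cast; push_cast at h1'; linarith
    exact Int.lt_add_one_iff.mp (by exact_mod_cast this)
  have c2 : (m + 1 : ℤ) ≤ (m' + 1) * 2 ^ e := by
    have h0 : (m : ℝ) * 2 ^ k < ((m':ℝ) + 1) * 2 ^ k' := lt_of_le_of_lt h1.1 h2.2
    rw [hke, show ((m':ℝ) + 1) * (2 ^ k * ((2 ^ e : ℤ) : ℝ)) = (((m':ℝ) + 1) * ((2 ^ e : ℤ) : ℝ)) * 2 ^ k from by ring] at h0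
    have h1' : (m : ℝ) < ((m':ℝ) + 1) * ((2 ^ e : ℤ) : ℝ) := lt_of_mul_lt_mul_right h0 h2k.le
    have : ((m : ℤ) : ℝ) < (((m' + 1) * 2 ^ e : ℤ) : ℝ) := by push_cast; push_cast at h1'; linarith
    exact Int.add_one_le_iff.mpr (by exact_mod_cast this)
  intro y hy
  constructor
  · have : (m' : ℝ) * 2 ^ k' ≤ (m:ℝ) * 2 ^ k := by
      rw [hke]
      have : ((m' * 2 ^ e : ℤ) : ℝ) ≤ ((m : ℤ) : ℝ) := by exact_mod_cast c1
      push_cast at this ⊢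
      nlinarith
    linarith [hy.1]
  · have : ((m:ℝ) + 1) * 2 ^ k ≤ ((m':ℝ) + 1) * 2 ^ k' := by
      rw [hke]
      have : ((m + 1 : ℤ) : ℝ) ≤ (((m' + 1) * 2 ^ e : ℤ) : ℝ) := by exact_mod_cast c2
      push_cast at this ⊢
      nlinarith
    linarith [hy.2]

lemma subset_of_k_le {n : ℕ} {Q R : DyadicCube n} (hk : Q.k ≤ R.k) {x : Fin n → ℝ}
    (hxQ : x ∈ Q.toSet) (hxR : x ∈ R.toSet) : Q.toSet ⊆ R.toSet := by
  intro y hy i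
  exact interval_subset hk (hxQ i) (hxR i) (y i) (hy i)

lemma subset_or_subset {n : ℕ} {Q R : DyadicCube n} {x : Fin n → ℝ}
    (hxQ : x ∈ Q.toSet) (hxR : x ∈ R.toSet) :
    Q.toSet ⊆ R.toSet ∨ R.toSet ⊆ Q.toSet := by
  rcases le_total Q.k R.k with h | h
  · exact Or.inl (subset_of_k_le h hxQ hxR)
  · exact Or.inr (subset_of_k_le h hxR hxQ)

lemma eq_of_k_eq_mem {n : ℕ} {Q R : DyadicCube n} (hk : Q.k = R.k) {x : Fin n → ℝ}
    (hxQ : x ∈ Q.toSet) (hxR : x ∈ R.toSet) : Q = R := by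
  have hm : Q.m = R.m := by
    funext i
    have h1 := hxQ i
    have h2 := hxR i
    rw [hk] at h1
    have h2k : (0:ℝ) < (2:ℝ) ^ R.k := zpow_pos (by norm_num) _
    have l1 : (Q.m i : ℝ) < (R.m i : ℝ) + 1 := by nlinarith [h1.1, h2.2]
    have l2 : (R.m i : ℝ) < (Q.m i : ℝ) + 1 := by nlinarith [h2.1, h1.2]
    have : Q.m i < R.m i + 1 := by exact_mod_cast l1
    have : R.m i < Q.m i + 1 := by exact_mod_cast l2
    omega
  cases Q; cases R; simp_all

lemma k_lt_of_ssubset {n : ℕ} {Q R : DyadicCube n} (h : Q.toSet ⊂ R.toSet) : Q.k < R.k := by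
  obtain ⟨x, hx⟩ := Q.nonempty_toSet
  have hxR : x ∈ R.toSet := h.1 hx
  by_contra hle
  push_neg at hle
  rcases eq_or_lt_of_le hle with heq | hlt
  · exact (HasSSubset.SSubset.ne h) (congrArg toSet (eq_of_k_eq_mem heq.symm hx hxR))
  · exact (HasSSubset.SSubset.not_subset h) (subset_of_k_le hle hxR hx) |>.elim

lemma toSet_univ_zero (Q : DyadicCube 0) : Q.toSet = Set.univ := by
  ext x; simp only [toSet, Set.mem_setOf_eq, Set.mem_univ, iff_true]
  exact fun i => i.elim0

lemma ssubset_of_k_lt_of_mem {n : ℕ} (hn : n ≠ 0) {Q R : DyadicCube n} (hk : Q.k < R.k)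
    {x : Fin n → ℝ} (hxQ : x ∈ Q.toSet) (hxR : x ∈ R.toSet) : Q.toSet ⊂ R.toSet := by
  refine ⟨subset_of_k_le hk.le hxQ hxR, fun hsub => ?_⟩
  have hvol : Q.vol < R.vol := by
    rw [vol_eq, vol_eq]
    have h1 : (0:ℝ) < (2:ℝ) ^ Q.k := zpow_pos (by norm_num) _
    have h2 : (2:ℝ) ^ Q.k < (2:ℝ) ^ R.k := zpow_lt_zpow_right₀ (by norm_num : (1:ℝ) < 2) hk
    exact pow_lt_pow_left₀ h2 h1.le hn
  have : Q.toSet = R.toSet := le_antisymm (subset_of_k_le hk.le hxQ hxR) hsub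
  rw [vol, vol, this] at hvol
  exact lt_irrefl _ hvol

lemma finite_strict {n : ℕ} (S : Set (DyadicCube n))
    (hno : ¬ ∃ f : ℕ → DyadicCube n, (∀ i, f i ∈ S) ∧
      ∀ i, (f i).toSet ⊂ (f (i + 1)).toSet) (Q₀ : DyadicCube n) :
    {Q | Q ∈ S ∧ Q₀.toSet ⊂ Q.toSet}.Finite := by
  set T := {Q | Q ∈ S ∧ Q₀.toSet ⊂ Q.toSet} with hT
  by_contra hinf
  rw [← Set.not_infinite, not_not] at hinf
  obtain ⟨x₀, hx₀⟩ := Q₀.nonempty_toSet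
  -- n ≠ 0
  have hn : n ≠ 0 := by
    obtain ⟨Q, hQ⟩ := hinf.nonempty
    intro h0
    subst h0
    have h2 := hQ.2
    rw [toSet_univ_zero, toSet_univ_zero] at h2
    exact lt_irrefl _ h2
  have hmemT : ∀ Q ∈ T, x₀ ∈ Q.toSet ∧ Q₀.k < Q.k := fun Q hQ =>
    ⟨hQ.2.1 hx₀, k_lt_of_ssubset hQ.2⟩
  set g : DyadicCube n → ℕ := fun Q => (Q.k - Q₀.k).toNat with hg
  have hinj : Set.InjOn g T := by
    intro Q hQ R hR hgQR
    have h1 := hmemT Q hQ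
    have h2 := hmemT R hR
    have : Q.k = R.k := by simp only [hg] at hgQR; omega
    exact eq_of_k_eq_mem this h1.1 h2.1
  have hB : (g '' T).Infinite := (Set.infinite_image_iff hinj).mpr hinf
  have hB' : {i | i ∈ g '' T}.Infinite := hB
  set p : ℕ → Prop := fun i => i ∈ g '' T with hp
  have hmem : ∀ i, Nat.nth p i ∈ g '' T := fun i => Nat.nth_mem_of_infinite hB' i
  have hchoose : ∀ i, ∃ Q, Q ∈ T ∧ g Q = Nat.nth p i := by
    intro i
    obtain ⟨Q, hQ, hgQ⟩ := hmem i
    exact ⟨Q, hQ, hgQ⟩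
  set F : ℕ → DyadicCube n := fun i => (hchoose i).choose with hF
  have hFT : ∀ i, F i ∈ T := fun i => (hchoose i).choose_spec.1
  have hFk : ∀ i, (F i).k = Q₀.k + Nat.nth p i := by
    intro i
    have h1 := (hchoose i).choose_spec.2
    have h2 := (hmemT _ (hFT i)).2
    simp only [hg] at h1
    simp only [hF] at h2 ⊢
    omega
  refine hno ⟨F, fun i => (hFT i).1, fun i => ?_⟩
  have hk : (F i).k < (F (i+1)).k := by
    rw [hFk, hFk]
    have := (Nat.nth_lt_nth hB').mpr (by omega : i < i + 1)
    omega
  exact ssubset_of_k_lt_of_mem hn hk (hmemT _ (hFT i)).1 (hmemT _ (hFT (i+1))).1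

lemma integrableOn_toSet {n : ℕ} {f : (Fin n → ℝ) → ℝ} (hf : LocallyIntegrable f volume)
    (Q : DyadicCube n) : IntegrableOn f Q.toSet volume := by
  have hK : IsCompact (Set.pi Set.univ
      (fun i => Set.Icc ((Q.m i : ℝ) * 2 ^ Q.k) (((Q.m i : ℝ) + 1) * 2 ^ Q.k))) :=
    isCompact_univ_pi fun i => isCompact_Icc
  refine (hf.integrableOn_isCompact hK).mono_set ?_
  rw [toSet_eq_pi]
  exact Set.pi_mono fun i _ => Set.Ico_subset_Icc_self

end DyadicCube

open DyadicCube

section Core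

variable {n : ℕ} {w : (Fin n → ℝ) → ℝ}

/-- The `A_p`–sparse bound: `∫_Q w ≤ C Λ^p ∫_{E} w` in `ℝ≥0∞` form. -/
lemma sparse_Ap_bound {p p' C Λ : ℝ}
    (hp : 1 < p) (hpp' : 1 / p + 1 / p' = 1) (hΛ : 1 < Λ) (hC : 0 ≤ C)
    (hwpos : ∀ᵐ x, 0 < w x)
    (hwloc : LocallyIntegrable w volume)
    (hw'loc : LocallyIntegrable (fun x => w x ^ (1 - p')) volume)
    (hAp : ∀ Q : DyadicCube n,
      davg w Q * (davg (fun x => w x ^ (1 - p')) Q) ^ (p - 1) ≤ C)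
    (Q : DyadicCube n) (Eset : Set (Fin n → ℝ)) (hEsub : Eset ⊆ Q.toSet)
    (hEmeas : MeasurableSet Eset)
    (hEvol : (1 / Λ) * Q.vol ≤ (volume Eset).toReal) :
    ∫⁻ x in Q.toSet, ENNReal.ofReal (w x) ≤
      ENNReal.ofReal (C * Λ ^ p) * ∫⁻ x in Eset, ENNReal.ofReal (w x) := by
  have hpq : Real.HolderConjugate p p' := ⟨by simpa [one_div] using hpp', by linarith, one_div_pos.mp (by have : 1/p < 1 := (div_lt_one (by linarith)).mpr hp; linarith)⟩
  have hp0 : p ≠ 0 := hpq.ne_zero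
  have hp'0 : p' ≠ 0 := hpq.symm.ne_zero
  have hΛ0 : (0:ℝ) < Λ := lt_trans one_pos hΛ
  set fw : (Fin n → ℝ) → ℝ≥0∞ := fun x => ENNReal.ofReal (w x) with hfw
  set fσ : (Fin n → ℝ) → ℝ≥0∞ := fun x => ENNReal.ofReal (w x ^ (1 - p')) with hfσ
  have hw_aem : AEMeasurable w volume := hwloc.aestronglyMeasurable.aemeasurable
  have hfw_aem : ∀ (μ : Measure (Fin n → ℝ)) (h : μ ≪ volume), AEMeasurable fw μ := by
    intro μ hμ
    exact ENNReal.measurable_ofReal.comp_aemeasurable (hw_aem.mono_ac hμ)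
  -- Hölder step
  set A := ∫⁻ x in Eset, fw x with hA
  set BQ := ∫⁻ x in Q.toSet, fσ x with hBQ
  have hμE_ac : volume.restrict Eset ≪ volume := Measure.restrict_le_self.absolutelyContinuous
  have hμQ_ac : volume.restrict Q.toSet ≪ volume := Measure.restrict_le_self.absolutelyContinuous
  have haeE : ∀ᵐ x ∂(volume.restrict Eset), 0 < w x := ae_restrict_of_ae hwpos
  have hexp : -(1/p) * p' = 1 - p' := by
    have h1 : 1/p = 1 - 1/p' := by linarith
    calc -(1/p) * p' = -(1 - 1/p') * p' := by rw [h1]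
      _ = -p' + (1/p') * p' := by ring
      _ = 1 - p' := by rw [one_div, inv_mul_cancel₀ hp'0]; ring
  have hexp2 : (1/p') * p = p - 1 := by
    have h1 : 1/p' = 1 - 1/p := by linarith
    calc (1/p') * p = (1 - 1/p) * p := by rw [h1]
      _ = p - (1/p) * p := by ring
      _ = p - 1 := by rw [one_div, inv_mul_cancel₀ hp0]
  have hp1 : (0:ℝ) ≤ p - 1 := by linarith
  -- Hölder applied on `Eset`
  have holder : volume Eset ≤ A ^ (1/p) * (∫⁻ x in Eset, fσ x) ^ (1/p') := by
    have h1 : (fun x => fw x ^ (1/p) * fw x ^ (-(1/p)))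
        =ᵐ[volume.restrict Eset] (fun _ => (1 : ℝ≥0∞)) := by
      filter_upwards [haeE] with x hx
      have h0 : fw x ≠ 0 := by
        simp only [hfw, ne_eq, ENNReal.ofReal_eq_zero, not_le]; exact hx
      have htop : fw x ≠ ⊤ := ENNReal.ofReal_ne_top
      rw [← ENNReal.rpow_add _ _ h0 htop]
      norm_num
    have h2 := ENNReal.lintegral_mul_le_Lp_mul_Lq (volume.restrict Eset) hpq
      ((hfw_aem _ hμE_ac).pow_const (1/p)) ((hfw_aem _ hμE_ac).pow_const (-(1/p)))
    have h3 : ∫⁻ x, ((fun y => fw y ^ (1/p)) * (fun y => fw y ^ (-(1/p)))) x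
        ∂(volume.restrict Eset) = volume Eset := by
      simp only [Pi.mul_apply]
      rw [lintegral_congr_ae h1]
      simp
    rw [h3] at h2
    have h4 : ∫⁻ x, (fw x ^ (1/p)) ^ p ∂(volume.restrict Eset) = A := by
      rw [hA]
      refine lintegral_congr fun x => ?_
      rw [← ENNReal.rpow_mul, one_div, inv_mul_cancel₀ hp0, ENNReal.rpow_one]
    have h5 : ∫⁻ x, (fw x ^ (-(1/p))) ^ p' ∂(volume.restrict Eset)
        = ∫⁻ x in Eset, fσ x := by
      refine lintegral_congr_ae ?_
      filter_upwards [haeE] with x hx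
      rw [← ENNReal.rpow_mul, hexp]
      simp only [hfw, hfσ]
      rw [ENNReal.ofReal_rpow_of_pos hx]
    rw [h4, h5] at h2
    exact h2
  have holder' : volume Eset ≤ A ^ (1/p) * BQ ^ (1/p') := by
    refine le_trans holder (mul_le_mul_right ?_ _)
    exact ENNReal.rpow_le_rpow (lintegral_mono_set hEsub)
      (div_nonneg zero_le_one hpq.symm.pos.le)
  -- raise to the power p
  have hstepB : (volume Eset) ^ p ≤ A * BQ ^ (p - 1) := by
    calc (volume Eset) ^ p ≤ (A ^ (1/p) * BQ ^ (1/p')) ^ p :=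
          ENNReal.rpow_le_rpow holder' (by positivity)
      _ = (A ^ (1/p)) ^ p * (BQ ^ (1/p')) ^ p := ENNReal.mul_rpow_of_nonneg _ _ (by positivity)
      _ = A * BQ ^ (p - 1) := by
          rw [← ENNReal.rpow_mul, ← ENNReal.rpow_mul, one_div, inv_mul_cancel₀ hp0,
            ENNReal.rpow_one, hexp2]
  -- the A_p condition in ℝ≥0∞ form
  set WQ := ∫⁻ x in Q.toSet, fw x with hWQ
  have hw_nn : (0:ℝ) ≤ ∫ x in Q.toSet, w x := by
    refine setIntegral_nonneg_of_ae_restrict ?_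
    filter_upwards [ae_restrict_of_ae hwpos] with x hx using hx.le
  have hσ_nn : (0:ℝ) ≤ ∫ x in Q.toSet, w x ^ (1 - p') := by
    refine setIntegral_nonneg_of_ae_restrict ?_
    filter_upwards [ae_restrict_of_ae hwpos] with x hx using (Real.rpow_pos_of_pos hx _).le
  have hWQ_eq : WQ = ENNReal.ofReal (∫ x in Q.toSet, w x) := by
    rw [hWQ, ofReal_integral_eq_lintegral_ofReal (integrableOn_toSet hwloc Q)
      (by filter_upwards [ae_restrict_of_ae hwpos] with x hx using hx.le)]
  have hBQ_eq : BQ = ENNReal.ofReal (∫ x in Q.toSet, w x ^ (1 - p')) := by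
    rw [hBQ, ofReal_integral_eq_lintegral_ofReal (integrableOn_toSet hw'loc Q)
      (by filter_upwards [ae_restrict_of_ae hwpos] with x hx
          using (Real.rpow_pos_of_pos hx _).le)]
  have hv : (0:ℝ) < Q.vol := Q.vol_pos
  have hkey : (∫ x in Q.toSet, w x) * (∫ x in Q.toSet, w x ^ (1 - p')) ^ (p - 1)
      ≤ C * Q.vol ^ p := by
    have h := hAp Q
    rw [davg, davg] at h
    set a := ∫ x in Q.toSet, w x
    set s := ∫ x in Q.toSet, w x ^ (1 - p')
    have hvp : Q.vol ^ p = Q.vol * Q.vol ^ (p - 1) := by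
      nth_rewrite 1 [show p = 1 + (p - 1) by ring]
      rw [Real.rpow_add hv, Real.rpow_one]
    have hdiv : (s / Q.vol) ^ (p - 1) = s ^ (p - 1) / Q.vol ^ (p - 1) :=
      Real.div_rpow hσ_nn hv.le _
    have hvpp : (0:ℝ) < Q.vol ^ (p - 1) := Real.rpow_pos_of_pos hv _
    calc a * s ^ (p - 1) = (a / Q.vol * (s / Q.vol) ^ (p - 1)) * (Q.vol * Q.vol ^ (p - 1)) := by
          rw [hdiv]; field_simp
      _ ≤ C * (Q.vol * Q.vol ^ (p - 1)) := by
          have hnn : (0:ℝ) ≤ Q.vol * Q.vol ^ (p - 1) := by positivity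
          exact mul_le_mul_of_nonneg_right h hnn
      _ = C * Q.vol ^ p := by rw [← hvp]
  have hstepC : WQ * BQ ^ (p - 1) ≤ ENNReal.ofReal C * (volume Q.toSet) ^ p := by
    rw [hWQ_eq, hBQ_eq, ENNReal.ofReal_rpow_of_nonneg hσ_nn hp1,
      ← ENNReal.ofReal_mul hw_nn]
    have hvol : volume Q.toSet = ENNReal.ofReal Q.vol :=
      (ENNReal.ofReal_toReal Q.volume_toSet_lt_top.ne).symm
    rw [hvol, ENNReal.ofReal_rpow_of_pos hv, ← ENNReal.ofReal_mul hC]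
    exact ENNReal.ofReal_le_ofReal hkey
  -- |Q| ≤ Λ |E|
  have hstepD : volume Q.toSet ≤ ENNReal.ofReal Λ * volume Eset := by
    have h1 : Q.vol ≤ Λ * (volume Eset).toReal := by
      have h2 := mul_le_mul_of_nonneg_left hEvol hΛ0.le
      rw [show Λ * (1/Λ * Q.vol) = Q.vol by field_simp] at h2
      exact h2
    have h2 : volume Q.toSet = ENNReal.ofReal Q.vol :=
      (ENNReal.ofReal_toReal Q.volume_toSet_lt_top.ne).symm
    rw [h2]
    calc ENNReal.ofReal Q.vol ≤ ENNReal.ofReal (Λ * (volume Eset).toReal) :=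
          ENNReal.ofReal_le_ofReal h1
      _ = ENNReal.ofReal Λ * ENNReal.ofReal ((volume Eset).toReal) :=
          ENNReal.ofReal_mul hΛ0.le
      _ ≤ ENNReal.ofReal Λ * volume Eset :=
          mul_le_mul_right ENNReal.ofReal_toReal_le _
  -- combine
  have hE_pos : volume Eset ≠ 0 := by
    intro h0
    rw [h0] at hEvol
    simp only [ENNReal.toReal_zero] at hEvol
    have h1 : (0:ℝ) < 1/Λ := by positivity
    nlinarith [mul_pos h1 Q.vol_pos]
  have hE_top : volume Eset ≠ ⊤ :=
    (lt_of_le_of_lt (measure_mono hEsub) Q.volume_toSet_lt_top).ne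
  have hX0 : (volume Eset) ^ p ≠ 0 :=
    (ENNReal.rpow_pos (pos_iff_ne_zero.mpr hE_pos) hE_top).ne'
  have hXtop : (volume Eset) ^ p ≠ ⊤ := (ENNReal.rpow_lt_top_of_nonneg (by positivity) hE_top).ne
  have main : WQ * (volume Eset) ^ p ≤ (ENNReal.ofReal (C * Λ ^ p) * A) * (volume Eset) ^ p := by
    calc WQ * (volume Eset) ^ p ≤ WQ * (A * BQ ^ (p - 1)) := mul_le_mul_right hstepB _
      _ = A * (WQ * BQ ^ (p - 1)) := by ring
      _ ≤ A * (ENNReal.ofReal C * (volume Q.toSet) ^ p) := mul_le_mul_right hstepC _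
      _ ≤ A * (ENNReal.ofReal C * ((ENNReal.ofReal Λ * volume Eset) ^ p)) := by
          exact mul_le_mul_right (mul_le_mul_right
            (ENNReal.rpow_le_rpow hstepD (by positivity)) _) _
      _ = (ENNReal.ofReal (C * Λ ^ p) * A) * (volume Eset) ^ p := by
          rw [ENNReal.mul_rpow_of_nonneg _ _ (by positivity : (0:ℝ) ≤ p),
            ENNReal.ofReal_rpow_of_pos hΛ0, ENNReal.ofReal_mul hC]
          ring
  have := (ENNReal.mul_le_mul_iff_left hX0 hXtop).mp main
  exact this

end Core


/-- Let `S` be `Λ`-Carleson with no infinitely increasing chains, with `1/Λ`-sparse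
major sets, and let `w ∈ A_p^D` with dyadic characteristic at most `C`. Then
`b_S^w = Σ_{Q∈S} ⟨w⟩_Q 1_Q` satisfies `‖b_S^w‖_{BMO^D(w)} ≤ 2 C Λ^p`. -/
theorem stmt8 {n : ℕ} (S : Set (DyadicCube n)) (Λ p p' C : ℝ)
    (hΛ : 1 < Λ) (hp : 1 < p) (hpp' : 1 / p + 1 / p' = 1)
    (hCar : IsCarleson Λ S)
    (hno : ¬ ∃ f : ℕ → DyadicCube n, (∀ i, f i ∈ S) ∧
      ∀ i, (f i).toSet ⊂ (f (i + 1)).toSet)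
    (E : DyadicCube n → Set (Fin n → ℝ))
    (hEsub : ∀ Q ∈ S, E Q ⊆ Q.toSet)
    (hEmeas : ∀ Q ∈ S, MeasurableSet (E Q))
    (hEvol : ∀ Q ∈ S, (1 / Λ) * Q.vol ≤ (volume (E Q)).toReal)
    (hEdisj : ∀ Q ∈ S, ∀ R ∈ S, Q ≠ R → Disjoint (E Q) (E R))
    (w : (Fin n → ℝ) → ℝ)
    (hwpos : ∀ᵐ x, 0 < w x)
    (hwloc : LocallyIntegrable w volume)
    (hw'loc : LocallyIntegrable (fun x => w x ^ (1 - p')) volume)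
    (hAp : ∀ Q : DyadicCube n,
      davg w Q * (davg (fun x => w x ^ (1 - p')) Q) ^ (p - 1) ≤ C) :
    ∀ Q₀ : DyadicCube n,
      (∫ x in Q₀.toSet, |bSw S w x - (∫ y in Q₀.toSet, bSw S w y) / Q₀.vol|) /
          (∫ x in Q₀.toSet, w x) ≤ 2 * C * Λ ^ p := by
  intro Q₀
  have hΛ0 : (0:ℝ) < Λ := lt_trans one_pos hΛ
  have hp0 : (0:ℝ) < p := lt_trans one_pos hp
  -- positivity of set integrals of w
  have hw_nn_ae : ∀ (s : Set (Fin n → ℝ)), 0 ≤ᵐ[volume.restrict s] w := fun s =>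
    ae_restrict_of_ae (hwpos.mono fun x hx => hx.le)
  have hpos_int : ∀ Q : DyadicCube n, 0 < ∫ x in Q.toSet, w x := by
    intro Q
    rw [setIntegral_pos_iff_support_of_nonneg_ae (hw_nn_ae _) (integrableOn_toSet hwloc Q)]
    have hnull : volume {x | ¬ 0 < w x} = 0 := by
      simpa [ae_iff] using hwpos
    have hsub : Q.toSet \ {x | ¬ 0 < w x} ⊆ Function.support w ∩ Q.toSet := by
      rintro x ⟨hx1, hx2⟩
      simp only [Set.mem_setOf_eq, not_not] at hx2
      exact ⟨ne_of_gt hx2, hx1⟩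
    calc (0:ℝ≥0∞) < volume Q.toSet := Q.volume_toSet_pos
      _ = volume (Q.toSet \ {x | ¬ 0 < w x}) := (measure_diff_null hnull).symm
      _ ≤ volume (Function.support w ∩ Q.toSet) := measure_mono hsub
  have hσpos : ∀ᵐ x, 0 < w x ^ (1 - p') :=
    hwpos.mono fun x hx => Real.rpow_pos_of_pos hx _
  have hσ_nn_ae : ∀ (s : Set (Fin n → ℝ)), 0 ≤ᵐ[volume.restrict s] fun x => w x ^ (1 - p') :=
    fun s => ae_restrict_of_ae (hσpos.mono fun x hx => hx.le)
  have hσpos_int : ∀ Q : DyadicCube n, 0 < ∫ x in Q.toSet, w x ^ (1 - p') := by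
    intro Q
    rw [setIntegral_pos_iff_support_of_nonneg_ae (hσ_nn_ae _) (integrableOn_toSet hw'loc Q)]
    have hnull : volume {x | ¬ 0 < w x ^ (1 - p')} = 0 := by
      simpa [ae_iff] using hσpos
    have hsub : Q.toSet \ {x | ¬ 0 < w x ^ (1 - p')} ⊆
        Function.support (fun x => w x ^ (1 - p')) ∩ Q.toSet := by
      rintro x ⟨hx1, hx2⟩
      simp only [Set.mem_setOf_eq, not_not] at hx2
      exact ⟨ne_of_gt hx2, hx1⟩
    calc (0:ℝ≥0∞) < volume Q.toSet := Q.volume_toSet_pos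
      _ = volume (Q.toSet \ {x | ¬ 0 < w x ^ (1 - p')}) := (measure_diff_null hnull).symm
      _ ≤ volume _ := measure_mono hsub
  have hdavg_nn : ∀ Q : DyadicCube n, 0 ≤ davg w Q := fun Q =>
    div_nonneg (hpos_int Q).le Q.vol_pos.le
  have hC : (0:ℝ) < C := by
    refine lt_of_lt_of_le ?_ (hAp Q₀)
    have h1 : 0 < davg w Q₀ := div_pos (hpos_int Q₀) Q₀.vol_pos
    have h2 : 0 < davg (fun x => w x ^ (1 - p')) Q₀ :=
      div_pos (hσpos_int Q₀) Q₀.vol_pos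
    exact mul_pos h1 (Real.rpow_pos_of_pos h2 _)
  have hCΛ : (0:ℝ) ≤ C * Λ ^ p := by positivity
  -- families
  set Sin : Set (DyadicCube n) := {Q | Q ∈ S ∧ Q.toSet ⊆ Q₀.toSet} with hSin
  set Sout : Set (DyadicCube n) := {Q | Q ∈ S ∧ Q₀.toSet ⊂ Q.toSet} with hSout
  have houtfin : Sout.Finite := finite_strict S hno Q₀
  set T : DyadicCube n → (Fin n → ℝ) → ℝ≥0∞ := fun Q x =>
    (Q.toSet).indicator (fun _ => ENNReal.ofReal (davg w Q)) x with hTdef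
  have hT_meas : ∀ Q, Measurable (T Q) := fun Q =>
    measurable_const.indicator (measurableSet_toSet Q)
  set Gfun : (Fin n → ℝ) → ℝ≥0∞ := fun x => ∑' Q : Sin, T Q x with hGdef
  have hG_meas : Measurable Gfun := Measurable.ennreal_tsum fun Q => hT_meas _
  set fw : (Fin n → ℝ) → ℝ≥0∞ := fun x => ENNReal.ofReal (w x) with hfwdef
  -- value of each lintegral term
  have hterm : ∀ Q : DyadicCube n, Q.toSet ⊆ Q₀.toSet →
      ∫⁻ x in Q₀.toSet, T Q x = ∫⁻ x in Q.toSet, fw x := by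
    intro Q hQsub
    rw [hTdef]
    rw [lintegral_indicator (measurableSet_toSet Q), lintegral_const]
    rw [Measure.restrict_restrict (measurableSet_toSet Q), Measure.restrict_apply_univ,
      Set.inter_eq_self_of_subset_left hQsub]
    have hvol : volume Q.toSet = ENNReal.ofReal Q.vol :=
      (ENNReal.ofReal_toReal Q.volume_toSet_lt_top.ne).symm
    rw [hvol, davg, ← ENNReal.ofReal_mul (div_nonneg (hpos_int Q).le Q.vol_pos.le),
      div_mul_cancel₀ _ Q.vol_pos.ne']
    exact ofReal_integral_eq_lintegral_ofReal (integrableOn_toSet hwloc Q) (hw_nn_ae _)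
  have hIeq : ∫⁻ x in Q₀.toSet, Gfun x = ∑' Q : Sin, ∫⁻ x in (Q : DyadicCube n).toSet, fw x := by
    rw [hGdef]
    rw [lintegral_tsum fun Q => (hT_meas _).aemeasurable]
    exact tsum_congr fun Q => hterm _ Q.2.2
  -- sparse bound for each cube in Sin
  have hsparse : ∀ Q : Sin, ∫⁻ x in (Q : DyadicCube n).toSet, fw x ≤
      ENNReal.ofReal (C * Λ ^ p) * ∫⁻ x in E (Q : DyadicCube n), fw x := fun Q =>
    sparse_Ap_bound hp hpp' hΛ hC.le hwpos hwloc hw'loc hAp _ _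
      (hEsub _ Q.2.1) (hEmeas _ Q.2.1) (hEvol _ Q.2.1)
  have hEdisj' : Pairwise (Function.onFun Disjoint fun Q : Sin => E (Q : DyadicCube n)) := by
    intro Q R hQR
    exact hEdisj _ Q.2.1 _ R.2.1 (fun h => hQR (Subtype.ext h))
  have hEsum : ∑' Q : Sin, ∫⁻ x in E (Q : DyadicCube n), fw x ≤ ∫⁻ x in Q₀.toSet, fw x := by
    rw [← lintegral_iUnion (fun Q : Sin => hEmeas _ Q.2.1) hEdisj']
    refine lintegral_mono_set ?_
    exact Set.iUnion_subset fun Q => (hEsub _ Q.2.1).trans Q.2.2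
  have hIbound : ∫⁻ x in Q₀.toSet, Gfun x ≤
      ENNReal.ofReal (C * Λ ^ p) * ∫⁻ x in Q₀.toSet, fw x := by
    rw [hIeq]
    calc ∑' Q : Sin, ∫⁻ x in (Q : DyadicCube n).toSet, fw x
        ≤ ∑' Q : Sin, ENNReal.ofReal (C * Λ ^ p) * ∫⁻ x in E (Q : DyadicCube n), fw x :=
          ENNReal.tsum_le_tsum hsparse
      _ = ENNReal.ofReal (C * Λ ^ p) * ∑' Q : Sin, ∫⁻ x in E (Q : DyadicCube n), fw x :=
          ENNReal.tsum_mul_left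
      _ ≤ _ := mul_le_mul_right hEsum _
  have hWtop : ∫⁻ x in Q₀.toSet, fw x < ⊤ := by
    have h := (integrableOn_toSet hwloc Q₀).2
    calc ∫⁻ x in Q₀.toSet, fw x
        = ENNReal.ofReal (∫ x in Q₀.toSet, w x) :=
          (ofReal_integral_eq_lintegral_ofReal (integrableOn_toSet hwloc Q₀) (hw_nn_ae _)).symm
      _ < ⊤ := ENNReal.ofReal_lt_top
  have hIG : ∫⁻ x in Q₀.toSet, Gfun x < ⊤ :=
    lt_of_le_of_lt hIbound (ENNReal.mul_lt_top ENNReal.ofReal_lt_top hWtop)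
  have hfin_ae : ∀ᵐ x ∂(volume.restrict Q₀.toSet), Gfun x < ⊤ :=
    ae_lt_top hG_meas hIG.ne
  -- the constant from the outer cubes
  set c : ℝ := ∑ Q ∈ houtfin.toFinset, davg w Q with hcdef
  have hU_ne_top : ∀ (Q : DyadicCube n) (x : Fin n → ℝ), T Q x ≠ ⊤ := by
    intro Q x
    simp only [hTdef]
    by_cases hx : x ∈ Q.toSet
    · rw [Set.indicator_of_mem hx]; exact ENNReal.ofReal_ne_top
    · rw [Set.indicator_of_notMem hx]; exact ENNReal.zero_ne_top
  have hUreal : ∀ (Q : DyadicCube n) (x : Fin n → ℝ),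
      (T Q x).toReal = Set.indicator Q.toSet (fun _ => davg w Q) x := by
    intro Q x
    simp only [hTdef]
    by_cases hx : x ∈ Q.toSet
    · rw [Set.indicator_of_mem hx, Set.indicator_of_mem hx,
        ENNReal.toReal_ofReal (hdavg_nn Q)]
    · rw [Set.indicator_of_notMem hx, Set.indicator_of_notMem hx, ENNReal.toReal_zero]
  -- a.e. pointwise decomposition on Q₀
  have hdecomp : ∀ᵐ x ∂(volume.restrict Q₀.toSet),
      bSw S w x = (Gfun x).toReal + c := by
    filter_upwards [hfin_ae, ae_restrict_mem Q₀.measurableSet_toSet] with x hGx hx₀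
    have hsplitfun : ∀ Q : DyadicCube n, S.indicator (fun R => T R x) Q =
        Sin.indicator (fun R => T R x) Q + Sout.indicator (fun R => T R x) Q := by
      intro Q
      by_cases hin : Q ∈ Sin
      · have hout : Q ∉ Sout := by
          intro hout
          exact ssubset_irrefl Q₀.toSet (lt_of_lt_of_le hout.2 hin.2)
        rw [Set.indicator_of_mem hin.1, Set.indicator_of_mem hin,
          Set.indicator_of_notMem hout, add_zero]
      · by_cases hout : Q ∈ Sout
        · rw [Set.indicator_of_mem hout.1, Set.indicator_of_mem hout,
            Set.indicator_of_notMem hin, zero_add]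
        · rw [Set.indicator_of_notMem hin, Set.indicator_of_notMem hout, add_zero]
          by_cases hQS : Q ∈ S
          · rw [Set.indicator_of_mem hQS]
            have hxQ : x ∉ Q.toSet := by
              intro hxQ
              rcases subset_or_subset hxQ hx₀ with hsub | hsup
              · exact hin ⟨hQS, hsub⟩
              · by_cases heq : Q.toSet ⊆ Q₀.toSet
                · exact hin ⟨hQS, heq⟩
                · exact hout ⟨hQS, HasSubset.Subset.ssubset_of_not_subset hsup heq⟩
            simp only [hTdef]
            exact Set.indicator_of_notMem hxQ _
          · rw [Set.indicator_of_notMem hQS]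
    have h1 : ∑' Q : S, T (Q : DyadicCube n) x = Gfun x + ∑ Q ∈ houtfin.toFinset, T Q x := by
      calc ∑' Q : S, T (Q : DyadicCube n) x
          = ∑' Q : DyadicCube n, S.indicator (fun R => T R x) Q := by simpa using tsum_subtype S fun R => T R x
        _ = ∑' Q : DyadicCube n, (Sin.indicator (fun R => T R x) Q +
              Sout.indicator (fun R => T R x) Q) := tsum_congr hsplitfun
        _ = (∑' Q : DyadicCube n, Sin.indicator (fun R => T R x) Q) +
              ∑' Q : DyadicCube n, Sout.indicator (fun R => T R x) Q := ENNReal.tsum_add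
        _ = Gfun x + ∑ Q ∈ houtfin.toFinset, T Q x := by
            congr 1
            · rw [← tsum_subtype Sin (fun R => T R x), hGdef]
            · rw [tsum_eq_sum (s := houtfin.toFinset)
                (fun Q hQ => Set.indicator_of_notMem (by simpa using hQ) _)]
              exact Finset.sum_congr rfl fun Q hQ =>
                Set.indicator_of_mem (by simpa using hQ) _
    have hsum_ne : ∑ Q ∈ houtfin.toFinset, T Q x ≠ ⊤ :=
      (ENNReal.sum_lt_top.mpr fun Q _ => (hU_ne_top Q x).lt_top).ne
    have hb : bSw S w x = (∑' Q : S, T (Q : DyadicCube n) x).toReal := by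
      rw [bSw, ENNReal.tsum_toReal_eq fun Q => hU_ne_top _ x]
      exact tsum_congr fun Q => (hUreal _ x).symm
    rw [hb, h1, ENNReal.toReal_add hGx.ne hsum_ne]
    congr 1
    rw [ENNReal.toReal_sum fun Q _ => hU_ne_top Q x, hcdef]
    refine Finset.sum_congr rfl fun Q hQ => ?_
    have hQout : Q ∈ Sout := by simpa using hQ
    have hxQ : x ∈ Q.toSet := hQout.2.1 hx₀
    rw [hUreal Q x, Set.indicator_of_mem hxQ]
  -- integrals
  set I : ℝ := (∫⁻ x in Q₀.toSet, Gfun x).toReal with hIdef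
  have hI_nn : 0 ≤ I := ENNReal.toReal_nonneg
  have hg_int : Integrable (fun x => (Gfun x).toReal) (volume.restrict Q₀.toSet) :=
    integrable_toReal_of_lintegral_ne_top hG_meas.aemeasurable hIG.ne
  have hIeq2 : ∫ x in Q₀.toSet, (Gfun x).toReal = I :=
    integral_toReal hG_meas.aemeasurable hfin_ae
  have hb_eq : ∫ y in Q₀.toSet, bSw S w y = I + c * Q₀.vol := by
    rw [integral_congr_ae hdecomp, integral_add hg_int ((integrableOn_const Q₀.volume_toSet_lt_top.ne)), hIeq2,
      setIntegral_const, smul_eq_mul]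
    rw [measureReal_def, show (volume Q₀.toSet).toReal = Q₀.vol from rfl]
    ring
  have hA : (∫ y in Q₀.toSet, bSw S w y) / Q₀.vol = I / Q₀.vol + c := by
    rw [hb_eq, add_div, mul_div_cancel_right₀ _ Q₀.vol_pos.ne']
  have habs : ∀ᵐ x ∂(volume.restrict Q₀.toSet),
      |bSw S w x - (∫ y in Q₀.toSet, bSw S w y) / Q₀.vol|
        = |(Gfun x).toReal - I / Q₀.vol| := by
    filter_upwards [hdecomp] with x hx
    rw [hx, hA]
    ring_nf
  have hnum : (∫ x in Q₀.toSet, |bSw S w x - (∫ y in Q₀.toSet, bSw S w y) / Q₀.vol|)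
      ≤ 2 * I := by
    rw [integral_congr_ae habs]
    have hIv_nn : 0 ≤ I / Q₀.vol := div_nonneg hI_nn Q₀.vol_pos.le
    have hle : ∀ x, |(Gfun x).toReal - I / Q₀.vol| ≤ (Gfun x).toReal + I / Q₀.vol := by
      intro x
      have h1 : (0:ℝ) ≤ (Gfun x).toReal := ENNReal.toReal_nonneg
      rw [abs_le]
      constructor <;> [linarith; linarith]
    calc ∫ x in Q₀.toSet, |(Gfun x).toReal - I / Q₀.vol|
        ≤ ∫ x in Q₀.toSet, ((Gfun x).toReal + I / Q₀.vol) := by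
          refine integral_mono_ae ((hg_int.sub ((integrableOn_const Q₀.volume_toSet_lt_top.ne))).abs)
            (hg_int.add ((integrableOn_const Q₀.volume_toSet_lt_top.ne))) (Filter.Eventually.of_forall hle)
      _ = I + (volume Q₀.toSet).toReal * (I / Q₀.vol) := by
          rw [integral_add hg_int ((integrableOn_const Q₀.volume_toSet_lt_top.ne)), hIeq2, setIntegral_const, smul_eq_mul, measureReal_def]
      _ = 2 * I := by
          rw [show (volume Q₀.toSet).toReal = Q₀.vol from rfl,
            mul_div_cancel₀ _ Q₀.vol_pos.ne']
          ring
  have hwtoReal : (∫⁻ x in Q₀.toSet, fw x).toReal = ∫ x in Q₀.toSet, w x := by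
    rw [← ofReal_integral_eq_lintegral_ofReal (integrableOn_toSet hwloc Q₀) (hw_nn_ae _),
      ENNReal.toReal_ofReal (hpos_int Q₀).le]
  have hIle : I ≤ C * Λ ^ p * ∫ x in Q₀.toSet, w x := by
    have h2 := ENNReal.toReal_mono
      (ENNReal.mul_lt_top ENNReal.ofReal_lt_top hWtop).ne hIbound
    rw [ENNReal.toReal_mul, ENNReal.toReal_ofReal hCΛ, hwtoReal] at h2
    exact h2
  rw [div_le_iff₀ (hpos_int Q₀)]
  calc (∫ x in Q₀.toSet, |bSw S w x - (∫ y in Q₀.toSet, bSw S w y) / Q₀.vol|)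
      ≤ 2 * I := hnum
    _ ≤ 2 * (C * Λ ^ p * ∫ x in Q₀.toSet, w x) := by linarith
    _ = 2 * C * Λ ^ p * ∫ x in Q₀.toSet, w x := by ring
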